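/- arXiv:math/0701102 — 3 statements merged into one kernel-verified Lean document; each statement's English description precedes it below -/
import Mathlib

section
/- Let V be an n × N matrix of 2k-wise independent uniform ±1 entries and Ṽ an n × N matrix of i.i.d. standard Gaussians. Then E[Tr((V Vᵀ)^k)] ≤ E[Tr((Ṽ Ṽᵀ)^k)]. -/
/-!
`Tr((A Aᵀ)^k)` is a polynomial with nonnegative coefficients and total degree `2k` in the entries
of `A`, so each of its monomials involves at most `2k` distinct entries. By `2k`-wise independence
the expectation of such a monomial factors into one-dimensional moments, and the moments of a
uniform sign (`1` for even exponents, `0` for odd ones) are dominated by the Gaussian ones: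
odd Gaussian moments vanish by symmetry, and `E[g^(2l)] ≥ (E[g²])^l = 1` by Jensen.
-/

open Matrix MeasureTheory ProbabilityTheory

/-- A family of real random variables is `k`-wise independent if every subfamily
of at most `k` of them is (mutually) independent. -/
def KWiseIndep {Ω : Type*} [MeasurableSpace Ω] {ι : Type*} (k : ℕ)
    (X : ι → Ω → ℝ) (μ : Measure Ω) : Prop :=
  ∀ s : Finset ι, s.card ≤ k →
    iIndepFun (fun i : s => X i) μ

open scoped NNReal

namespace Matrix

variable {l m n σ R : Type*} [CommSemiring R]

lemma totalDegree_mul_apply_le [Fintype m] {A : Matrix l m (MvPolynomial σ R)}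
    {B : Matrix m n (MvPolynomial σ R)} {a b : ℕ} (hA : ∀ i j, (A i j).totalDegree ≤ a)
    (hB : ∀ i j, (B i j).totalDegree ≤ b) (i : l) (j : n) :
    ((A * B) i j).totalDegree ≤ a + b :=
  (MvPolynomial.totalDegree_finsetSum _ _).trans <| Finset.sup_le fun k _ ↦
    (MvPolynomial.totalDegree_mul _ _).trans (add_le_add (hA i k) (hB k j))

lemma totalDegree_pow_apply_le [Fintype m] [DecidableEq m] {A : Matrix m m (MvPolynomial σ R)}
    {a : ℕ} (hA : ∀ i j, (A i j).totalDegree ≤ a) (k : ℕ) (i j : m) :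
    ((A ^ k) i j).totalDegree ≤ k * a := by
  induction k generalizing i j with
  | zero => by_cases h : i = j <;> simp [h]
  | succ k ih => rw [pow_succ, add_one_mul]; exact totalDegree_mul_apply_le ih hA i j

variable (m n R) in
noncomputable def gramTracePoly [Fintype m] [Fintype n] [DecidableEq m] (k : ℕ) :
    MvPolynomial (m × n) R :=
  ((mvPolynomialX m n R * (mvPolynomialX m n R)ᵀ) ^ k).trace

variable [Fintype m] [Fintype n] [DecidableEq m]

lemma totalDegree_gramTracePoly_le (k : ℕ) : (gramTracePoly m n R k).totalDegree ≤ 2 * k := by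
  have hX : ∀ i j, (mvPolynomialX m n R i j).totalDegree ≤ 1 := fun _ _ ↦
    (MvPolynomial.totalDegree_monomial_le _ _).trans (by simp)
  refine (MvPolynomial.totalDegree_finsetSum _ _).trans <| Finset.sup_le fun i _ ↦ ?_
  rw [mul_comm 2]
  exact totalDegree_pow_apply_le (totalDegree_mul_apply_le hX fun i j ↦ hX j i) k i i

lemma aeval_gramTracePoly {S : Type*} [CommSemiring S] [Algebra R S] (k : ℕ) (A : Matrix m n S) :
    MvPolynomial.aeval (fun p : m × n ↦ A p.1 p.2) (gramTracePoly m n R k) =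
      ((A * Aᵀ) ^ k).trace := by
  have hA : (mvPolynomialX m n R).map (MvPolynomial.aeval fun p : m × n ↦ A p.1 p.2) = A :=
    mvPolynomialX_map_eval₂ _ A
  rw [gramTracePoly, AddMonoidHom.map_trace, ← AlgHom.mapMatrix_apply, map_pow,
    AlgHom.mapMatrix_apply, Matrix.map_mul, transpose_map, hA]

end Matrix

lemma Finsupp.card_support_le_sum_self {σ : Type*} (s : σ →₀ ℕ) :
    s.support.card ≤ s.sum fun _ e ↦ e := by
  simpa [Finsupp.sum] using s.support.card_nsmul_le_sum s 1 fun i hi ↦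
    Nat.one_le_iff_ne_zero.mpr (Finsupp.mem_support_iff.mp hi)

section Moments

variable {Ω Ω' ι : Type*} [MeasurableSpace Ω] [MeasurableSpace Ω'] {μ : Measure Ω}
  {μ' : Measure Ω'}

lemma ProbabilityTheory.iIndepFun.integrable_finsetProd {f : ι → Ω → ℝ} (hf : iIndepFun f μ)
    (hint : ∀ i, Integrable (f i) μ) (s : Finset ι) : Integrable (∏ i ∈ s, f i) μ := by
  classical
  have := hf.isProbabilityMeasure
  induction s using Finset.induction_on with
  | empty => exact integrable_const 1
  | insert i s hi ih =>
    rw [Finset.prod_insert hi]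
    exact (hf.indepFun_finsetProd_of_notMem₀ (fun j ↦ (hint j).aemeasurable) hi).symm.integrable_mul
      (hint i) ih

lemma ProbabilityTheory.iIndepFun.kWiseIndep {X : ι → Ω → ℝ} (hX : iIndepFun X μ) (k : ℕ) :
    KWiseIndep k X μ :=
  fun _ _ ↦ hX.precomp Subtype.val_injective

namespace KWiseIndep

variable {X : ι → Ω → ℝ} {k : ℕ} {s : Finset ι}

lemma iIndepFun_pow (hX : KWiseIndep k X μ) (hs : s.card ≤ k) (c : ι → ℕ) :
    iIndepFun (fun i : s ↦ fun ω ↦ X i ω ^ c i) μ :=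
  (hX s hs).comp (fun i x ↦ x ^ c i) fun _ ↦ measurable_id.pow_const _

lemma integrable_prod_pow (hX : KWiseIndep k X μ) (hs : s.card ≤ k) (c : ι → ℕ)
    (hint : ∀ i, Integrable (fun ω ↦ X i ω ^ c i) μ) :
    Integrable (fun ω ↦ ∏ i ∈ s, X i ω ^ c i) μ := by
  simp_rw [← Finset.prod_coe_sort s]
  simpa [Finset.prod_fn] using
    (hX.iIndepFun_pow hs c).integrable_finsetProd (fun i ↦ hint i) Finset.univ

lemma integral_prod_pow (hX : KWiseIndep k X μ) (hs : s.card ≤ k) (c : ι → ℕ)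
    (hint : ∀ i, Integrable (fun ω ↦ X i ω ^ c i) μ) :
    ∫ ω, ∏ i ∈ s, X i ω ^ c i ∂μ = ∏ i ∈ s, ∫ ω, X i ω ^ c i ∂μ := by
  simp_rw [← Finset.prod_coe_sort s]
  exact (hX.iIndepFun_pow hs c).integral_fun_prod_eq_prod_integral fun i ↦ (hint i).1

end KWiseIndep

theorem integral_aeval_le_integral_aeval {X : ι → Ω → ℝ} {Y : ι → Ω' → ℝ} {d : ℕ}
    (hX : KWiseIndep d X μ) (hY : KWiseIndep d Y μ')
    (hXint : ∀ i c, Integrable (fun ω ↦ X i ω ^ c) μ)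
    (hYint : ∀ i c, Integrable (fun ω ↦ Y i ω ^ c) μ')
    (hX_nonneg : ∀ i c, 0 ≤ ∫ ω, X i ω ^ c ∂μ)
    (hXY : ∀ i c, ∫ ω, X i ω ^ c ∂μ ≤ ∫ ω, Y i ω ^ c ∂μ')
    (P : MvPolynomial ι ℝ≥0) (hP : P.totalDegree ≤ d) :
    ∫ ω, MvPolynomial.aeval (fun i ↦ X i ω) P ∂μ ≤
      ∫ ω, MvPolynomial.aeval (fun i ↦ Y i ω) P ∂μ' := by
  have hcard : ∀ s ∈ P.support, s.support.card ≤ d := fun s hs ↦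
    (s.card_support_le_sum_self.trans (MvPolynomial.le_totalDegree hs)).trans hP
  simp only [MvPolynomial.aeval_def, MvPolynomial.eval₂_eq]
  rw [integral_finsetSum _ fun s hs ↦
      (hX.integrable_prod_pow (hcard s hs) s fun i ↦ hXint i _).const_mul _,
    integral_finsetSum _ fun s hs ↦
      (hY.integrable_prod_pow (hcard s hs) s fun i ↦ hYint i _).const_mul _]
  refine Finset.sum_le_sum fun s hs ↦ ?_
  rw [integral_const_mul, integral_const_mul,
    hX.integral_prod_pow (hcard s hs) s fun i ↦ hXint i _,
    hY.integral_prod_pow (hcard s hs) s fun i ↦ hYint i _]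
  exact mul_le_mul_of_nonneg_left
    (Finset.prod_le_prod (fun i _ ↦ hX_nonneg i _) fun i _ ↦ hXY i _) (P.coeff s).2

section Sign

variable [IsProbabilityMeasure μ] {X : Ω → ℝ}

lemma integrable_pow_of_sign (hXm : Measurable X) (hX : ∀ ω, X ω = 1 ∨ X ω = -1) (c : ℕ) :
    Integrable (fun ω ↦ X ω ^ c) μ :=
  .of_bound (hXm.pow_const c).aestronglyMeasurable 1 <| ae_of_all _ fun ω ↦ by
    rcases hX ω with h | h <;> simp [h]

lemma integral_pow_of_sign (hXm : Measurable X) (hX : ∀ ω, X ω = 1 ∨ X ω = -1)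
    (hX1 : μ {ω | X ω = 1} = 1 / 2) (c : ℕ) :
    ∫ ω, X ω ^ c ∂μ = if Even c then 1 else 0 := by
  rcases Nat.even_or_odd c with hc | hc
  · have h1 : ∀ ω, X ω ^ c = 1 := fun ω ↦ by rcases hX ω with h | h <;> simp [h, hc.neg_one_pow]
    simp [h1, hc]
  have hXc : ∀ ω, X ω ^ c = X ω := fun ω ↦ by rcases hX ω with h | h <;> simp [h, hc.neg_one_pow]
  have hA : MeasurableSet {ω | X ω = 1} := hXm (measurableSet_singleton 1)
  have hX_eq : X = fun ω ↦ {ω | X ω = 1}.indicator (fun _ ↦ (2 : ℝ)) ω - 1 := by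
    funext ω
    rcases hX ω with h | h <;> norm_num [Set.indicator, h]
  simp only [hXc, Nat.not_even_iff_odd.mpr hc, if_false]
  rw [hX_eq, integral_sub ((integrable_const _).indicator hA) (integrable_const _),
    integral_indicator_const _ hA, measureReal_def, hX1]
  norm_num

end Sign

end Moments

lemma integrable_pow_gaussianReal (m : ℝ) (v : ℝ≥0) (c : ℕ) :
    Integrable (fun x : ℝ ↦ x ^ c) (gaussianReal m v) :=
  (memLp_id_gaussianReal (μ := m) (v := v) c).integrable_norm_pow'.mono' (by fun_prop)
    (ae_of_all _ fun x ↦ by simp)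

lemma integral_pow_gaussianReal_of_odd (v : ℝ≥0) {c : ℕ} (hc : Odd c) :
    ∫ x, x ^ c ∂gaussianReal 0 v = 0 := by
  have h : ∫ x, x ^ c ∂gaussianReal 0 v = ∫ x, (-x) ^ c ∂gaussianReal 0 v := by
    conv_lhs => rw [← neg_zero, ← gaussianReal_map_neg, integral_map (by fun_prop) (by fun_prop)]
  simp only [hc.neg_pow, integral_neg] at h
  linarith

lemma pow_le_integral_pow_two_mul_gaussianReal (v : ℝ≥0) (l : ℕ) :
    (v : ℝ) ^ l ≤ ∫ x, x ^ (2 * l) ∂gaussianReal 0 v := by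
  have hsq : ∫ x, x ^ 2 ∂gaussianReal 0 v = v := by
    simpa [variance_id_gaussianReal, integral_id_gaussianReal, eq_comm] using
      variance_eq_sub (memLp_id_gaussianReal (μ := 0) (v := v) 2)
  have hjensen := (convexOn_pow l).map_integral_le (f := fun x ↦ x ^ 2)
    (continuousOn_pow l) isClosed_Ici (ae_of_all _ fun x ↦ sq_nonneg x)
    (integrable_pow_gaussianReal 0 v 2)
    (by simpa [Function.comp_def, ← pow_mul] using integrable_pow_gaussianReal 0 v (2 * l))
  simpa [hsq, Function.comp_def, ← pow_mul] using hjensen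

lemma ite_even_le_integral_pow_gaussianReal (c : ℕ) :
    (if Even c then 1 else 0 : ℝ) ≤ ∫ x, x ^ c ∂gaussianReal 0 1 := by
  rcases Nat.even_or_odd c with ⟨l, rfl⟩ | hc
  · simpa [← two_mul] using pow_le_integral_pow_two_mul_gaussianReal 1 l
  · simp [Nat.not_even_iff_odd.mpr hc, integral_pow_gaussianReal_of_odd 1 hc]

theorem expected_trace_sign_le_gaussian_general
    {Ω Ω' : Type*} [MeasurableSpace Ω] [MeasurableSpace Ω']
    (μ : Measure Ω) [IsProbabilityMeasure μ]
    (μ' : Measure Ω') [IsProbabilityMeasure μ']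
    (n N k : ℕ)
    (V : Ω → Matrix (Fin n) (Fin N) ℝ)
    (hVmeas : ∀ i j, Measurable (fun ω => V ω i j))
    (hVsign : ∀ ω i j, V ω i j = 1 ∨ V ω i j = -1)
    (hVunif : ∀ i j, μ {ω | V ω i j = 1} = 1/2)
    (hVindep : KWiseIndep (2 * k) (fun (p : Fin n × Fin N) ω => V ω p.1 p.2) μ)
    (W : Ω' → Matrix (Fin n) (Fin N) ℝ)
    (hWmeas : ∀ i j, Measurable (fun ω => W ω i j))
    (hWindep : iIndepFun
      (fun (p : Fin n × Fin N) ω => W ω p.1 p.2) μ')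
    (hWgauss : ∀ i j, Measure.map (fun ω => W ω i j) μ' = gaussianReal 0 1) :
    ∫ ω, ((V ω * (V ω)ᵀ) ^ k).trace ∂μ ≤
      ∫ ω, ((W ω * (W ω)ᵀ) ^ k).trace ∂μ' := by
  have hWint : ∀ (p : Fin n × Fin N) c, Integrable (fun ω ↦ W ω p.1 p.2 ^ c) μ' := fun p c ↦ by
    have := integrable_pow_gaussianReal 0 1 c
    rwa [← hWgauss, integrable_map_measure (by fun_prop) (hWmeas p.1 p.2).aemeasurable] at this
  have hWmom : ∀ (p : Fin n × Fin N) c,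
      ∫ ω, W ω p.1 p.2 ^ c ∂μ' = ∫ x, x ^ c ∂gaussianReal 0 1 := fun p c ↦ by
    rw [← hWgauss, integral_map (hWmeas p.1 p.2).aemeasurable (by fun_prop)]
  have hVmom := fun (p : Fin n × Fin N) ↦
    integral_pow_of_sign (hVmeas p.1 p.2) (fun ω ↦ hVsign ω p.1 p.2) (hVunif p.1 p.2)
  simp_rw [← aeval_gramTracePoly (R := ℝ≥0)]
  refine integral_aeval_le_integral_aeval hVindep (hWindep.kWiseIndep _)
    (fun p ↦ integrable_pow_of_sign (hVmeas p.1 p.2) fun ω ↦ hVsign ω p.1 p.2) hWint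
    (fun p c ↦ ?_) (fun p c ↦ ?_) _ (totalDegree_gramTracePoly_le k)
  · rw [hVmom]
    positivity
  · rw [hVmom, hWmom]
    exact ite_even_le_integral_pow_gaussianReal c

/-- Let `V` be an `n × N` matrix of `2k`-wise independent uniform `±1` entries,
and `W` an `n × N` matrix of i.i.d. standard Gaussians. Then
`E[Tr((V Vᵀ)^k)] ≤ E[Tr((W Wᵀ)^k)]`. -/
theorem expected_trace_sign_le_gaussian
    {Ω Ω' : Type*} [MeasurableSpace Ω] [MeasurableSpace Ω']
    (μ : Measure Ω) [IsProbabilityMeasure μ]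
    (μ' : Measure Ω') [IsProbabilityMeasure μ']
    (n N k : ℕ) (hk : 1 ≤ k)
    (V : Ω → Matrix (Fin n) (Fin N) ℝ)
    (hVmeas : ∀ i j, Measurable (fun ω => V ω i j))
    (hVsign : ∀ ω i j, V ω i j = 1 ∨ V ω i j = -1)
    (hVunif : ∀ i j, μ {ω | V ω i j = 1} = 1/2)
    (hVindep : KWiseIndep (2 * k) (fun (p : Fin n × Fin N) ω => V ω p.1 p.2) μ)
    (W : Ω' → Matrix (Fin n) (Fin N) ℝ)
    (hWmeas : ∀ i j, Measurable (fun ω => W ω i j))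
    (hWindep : iIndepFun
      (fun (p : Fin n × Fin N) ω => W ω p.1 p.2) μ')
    (hWgauss : ∀ i j, Measure.map (fun ω => W ω i j) μ' = gaussianReal 0 1) :
    ∫ ω, ((V ω * (V ω)ᵀ) ^ k).trace ∂μ ≤
      ∫ ω, ((W ω * (W ω)ᵀ) ^ k).trace ∂μ' :=
  expected_trace_sign_le_gaussian_general μ μ' n N k V hVmeas hVsign hVunif hVindep W hWmeas hWindep
    hWgauss
end

section
/- Let P be the transition matrix of the random walk on a d-regular graph G on vertex set 𝒱, with λ = max_{i≥2}|λ_i(P)| the second largest eigenvalue in absolute value. Let S, S' ⊆ 𝒱 and let Π, Π' be the diagonal projections onto coordinates in S, S' respectively. Then ‖Π' P Π‖ ≤ √(λ + (1-λ)|S|/|𝒱|) · √(λ + (1-λ)|S'|/|𝒱|), where ‖·‖ is the ℓ₂ operator norm. -/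
/-!
Write `e = (1, …, 1)/√m` and split `u = ⟪e, u⟫ e + u⊥`, `w = ⟪e, w⟫ e + w⊥`. Since `P` is
symmetric and fixes `e`, it maps `e^⊥` into itself, so `⟪w, P u⟫ = ⟪e, u⟫⟪e, w⟫ + ⟪w⊥, P u⊥⟫`
with `|⟪w⊥, P u⊥⟫| ≤ λ ‖u⊥‖ ‖w⊥‖`. Cauchy–Schwarz in `ℝ²` turns this into
`|⟪w, P u⟫| ≤ √(⟪e, u⟫² + λ‖u⊥‖²) · √(⟪e, w⟫² + λ‖w⊥‖²)`. For `u = Π x` one has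
`⟪e, u⟫² ≤ |S|/m · ‖x‖²` and `‖u‖ ≤ ‖x‖`, so the first factor is at most
`√(λ + (1 - λ)|S|/m) ‖x‖`; likewise for `w = Π' y`, and `⟪y, Π' P Π x⟫ = ⟪Π' y, P (Π x)⟫`.
-/

open Matrix

/-- The Euclidean (`ℓ₂`) norm of a vector in `ℝ^m`. -/
noncomputable def euclNorm {m : ℕ} (x : Fin m → ℝ) : ℝ :=
  Real.sqrt (∑ v, x v ^ 2)

/-- The `ℓ₂ → ℓ₂` operator norm of a real matrix. -/
noncomputable def matrixOpNorm {m m' : ℕ} (V : Matrix (Fin m) (Fin m') ℝ) : ℝ :=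
  ‖LinearMap.toContinuousLinearMap (Matrix.toEuclideanLin V)‖

/-- The diagonal projection onto the coordinates in `S`. -/
def coordProj {m : ℕ} (S : Finset (Fin m)) : Matrix (Fin m) (Fin m) ℝ :=
  Matrix.diagonal (fun v => if v ∈ S then 1 else 0)

open scoped RealInnerProductSpace

theorem mul_add_mul_le_sqrt_mul_sqrt (a b c d : ℝ) :
    a * b + c * d ≤ √(a ^ 2 + c ^ 2) * √(b ^ 2 + d ^ 2) := by
  rw [← Real.sqrt_mul (by positivity)]
  exact (le_abs_self _).trans <| Real.abs_le_sqrt <| by nlinarith [sq_nonneg (a * d - b * c)]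

section SpectralGap

variable {E : Type*} [NormedAddCommGroup E] [InnerProductSpace ℝ E] {e : E}

theorem inner_sub_inner_smul_self (he : ‖e‖ = 1) (x : E) : ⟪e, x - ⟪e, x⟫ • e⟫ = 0 := by
  rw [inner_sub_right, real_inner_smul_right, real_inner_self_eq_norm_sq, he]
  ring

theorem norm_sub_inner_smul_sq (he : ‖e‖ = 1) (x : E) :
    ‖x - ⟪e, x⟫ • e‖ ^ 2 = ‖x‖ ^ 2 - ⟪e, x⟫ ^ 2 := by
  rw [← real_inner_self_eq_norm_sq, inner_sub_left, real_inner_smul_left,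
    inner_sub_inner_smul_self he, inner_sub_right, real_inner_smul_right,
    real_inner_self_eq_norm_sq, real_inner_comm e x]
  ring

theorem inner_apply_eq_of_isSymmetric {T : E →ₗ[ℝ] E} (hT : T.IsSymmetric) (he : ‖e‖ = 1)
    (hTe : T e = e) (u w : E) :
    ⟪w, T u⟫ = ⟪e, u⟫ * ⟪e, w⟫ + ⟪w - ⟪e, w⟫ • e, T (u - ⟪e, u⟫ • e)⟫ := by
  have hTu : T u = ⟪e, u⟫ • e + T (u - ⟪e, u⟫ • e) := by
    rw [map_sub, map_smul, hTe, add_sub_cancel]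
  have hTe' : ⟪e, T (u - ⟪e, u⟫ • e)⟫ = 0 := by
    rw [← hT, hTe, inner_sub_inner_smul_self he]
  rw [inner_sub_left, real_inner_smul_left, hTe', mul_zero, sub_zero, hTu, inner_add_right,
    real_inner_smul_right, real_inner_comm e w]

/-- Equals `⟪e, u⟫² + λ‖u - ⟪e, u⟫ e‖²` when `‖e‖ = 1`. -/
def spectralGapForm (e : E) (lam : ℝ) (u : E) : ℝ := (1 - lam) * ⟪e, u⟫ ^ 2 + lam * ‖u‖ ^ 2

theorem abs_inner_apply_le_of_spectral_gap {T : E →ₗ[ℝ] E} (hT : T.IsSymmetric) (he : ‖e‖ = 1)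
    (hTe : T e = e) {lam : ℝ} (hlam : 0 ≤ lam)
    (hgap : ∀ x, ⟪e, x⟫ = 0 → ‖T x‖ ≤ lam * ‖x‖) (u w : E) :
    |⟪w, T u⟫| ≤ √(spectralGapForm e lam u) * √(spectralGapForm e lam w) := by
  set u' := u - ⟪e, u⟫ • e
  set w' := w - ⟪e, w⟫ • e
  have hperp : |⟪w', T u'⟫| ≤ (√lam * ‖u'‖) * (√lam * ‖w'‖) := by
    calc |⟪w', T u'⟫| ≤ ‖w'‖ * ‖T u'‖ := abs_real_inner_le_norm _ _
      _ ≤ ‖w'‖ * (lam * ‖u'‖) := by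
        gcongr; exact hgap _ (inner_sub_inner_smul_self he u)
      _ = (√lam * ‖u'‖) * (√lam * ‖w'‖) := by
        rw [mul_mul_mul_comm, Real.mul_self_sqrt hlam]; ring
  have hsq : ∀ x : E, |⟪e, x⟫| ^ 2 + (√lam * ‖x - ⟪e, x⟫ • e‖) ^ 2
      = spectralGapForm e lam x := fun x => by
    rw [spectralGapForm, sq_abs, mul_pow, Real.sq_sqrt hlam, norm_sub_inner_smul_sq he]; ring
  calc |⟪w, T u⟫| ≤ |⟪e, u⟫| * |⟪e, w⟫| + (√lam * ‖u'‖) * (√lam * ‖w'‖) := by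
        rw [inner_apply_eq_of_isSymmetric hT he hTe, ← abs_mul]
        exact (abs_add_le _ _).trans (by gcongr)
    _ ≤ _ := by
      rw [← hsq u, ← hsq w]
      exact mul_add_mul_le_sqrt_mul_sqrt _ _ _ _

end SpectralGap

theorem ContinuousLinearMap.opNorm_le_of_inner_le {E F : Type*} [NormedAddCommGroup E]
    [InnerProductSpace ℝ E] [NormedAddCommGroup F] [InnerProductSpace ℝ F] (L : E →L[ℝ] F)
    {C : ℝ} (hC : 0 ≤ C) (h : ∀ u w, ⟪w, L u⟫ ≤ C * ‖u‖ * ‖w‖) : ‖L‖ ≤ C := by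
  refine L.opNorm_le_bound hC fun u => ?_
  rcases (norm_nonneg (L u)).eq_or_lt with h0 | hpos
  · rw [← h0]; positivity
  · have := h u (L u)
    rw [real_inner_self_eq_norm_sq, sq] at this
    exact le_of_mul_le_mul_right this hpos

open WithLp

section CoordinateSpace

variable {m : ℕ}

theorem euclNorm_eq_norm (x : Fin m → ℝ) : euclNorm x = ‖toLp 2 x‖ := by
  simp [euclNorm, EuclideanSpace.norm_eq]

noncomputable def uniformUnit (m : ℕ) : EuclideanSpace ℝ (Fin m) := toLp 2 fun _ => 1 / √m

theorem inner_uniformUnit (x : EuclideanSpace ℝ (Fin m)) :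
    ⟪uniformUnit m, x⟫ = (∑ v, x v) / √m := by
  simp [uniformUnit, EuclideanSpace.inner_eq_star_dotProduct, dotProduct, div_eq_mul_inv,
    Finset.sum_mul]

theorem norm_uniformUnit (hm : 0 < m) : ‖uniformUnit m‖ = 1 := by
  simp [EuclideanSpace.norm_eq, uniformUnit, hm.ne']

theorem toEuclideanLin_coordProj_apply (S : Finset (Fin m)) (x : EuclideanSpace ℝ (Fin m))
    (v : Fin m) : toEuclideanLin (coordProj S) x v = if v ∈ S then x v else 0 := by
  simp [toLpLin_apply, coordProj, mulVec_diagonal]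

theorem isSymmetric_toEuclideanLin_coordProj (S : Finset (Fin m)) :
    (toEuclideanLin (coordProj S)).IsSymmetric :=
  isSymmetric_toEuclideanLin_iff.mpr (isHermitian_iff_isSymm.mpr (isSymm_diagonal _))

theorem norm_toEuclideanLin_coordProj_le (S : Finset (Fin m)) (x : EuclideanSpace ℝ (Fin m)) :
    ‖toEuclideanLin (coordProj S) x‖ ≤ ‖x‖ := by
  rw [← sq_le_sq₀ (norm_nonneg _) (norm_nonneg _), EuclideanSpace.real_norm_sq_eq,
    EuclideanSpace.real_norm_sq_eq]
  refine Finset.sum_le_sum fun v _ => ?_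
  rw [toEuclideanLin_coordProj_apply]
  split_ifs <;> simp [sq_nonneg]

theorem inner_uniformUnit_coordProj_sq_le (S : Finset (Fin m)) (x : EuclideanSpace ℝ (Fin m)) :
    ⟪uniformUnit m, toEuclideanLin (coordProj S) x⟫ ^ 2 ≤ S.card / m * ‖x‖ ^ 2 := by
  rw [inner_uniformUnit, div_pow, Real.sq_sqrt m.cast_nonneg, div_mul_eq_mul_div,
    EuclideanSpace.real_norm_sq_eq]
  simp only [toEuclideanLin_coordProj_apply, Finset.sum_ite_mem, Finset.univ_inter]
  gcongr
  calc (∑ v ∈ S, x v) ^ 2 ≤ (S.card : ℝ) * ∑ v ∈ S, x v ^ 2 := by exact sq_sum_le_card_mul_sum_sq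
    _ ≤ S.card * ∑ v, x v ^ 2 := by gcongr; exact S.subset_univ

theorem sqrt_spectralGapForm_coordProj_le {lam : ℝ} (hlam0 : 0 ≤ lam) (hlam1 : lam ≤ 1)
    (S : Finset (Fin m)) (x : EuclideanSpace ℝ (Fin m)) :
    √(spectralGapForm (uniformUnit m) lam (toEuclideanLin (coordProj S) x)) ≤
      √(lam + (1 - lam) * S.card / m) * ‖x‖ := by
  rw [← Real.sqrt_sq (norm_nonneg x), ← Real.sqrt_mul' _ (sq_nonneg _), spectralGapForm]
  gcongr
  have h1 := mul_le_mul_of_nonneg_left (inner_uniformUnit_coordProj_sq_le S x)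
    (sub_nonneg.mpr hlam1)
  have h2 := mul_le_mul_of_nonneg_left (pow_le_pow_left₀ (norm_nonneg _)
    (norm_toEuclideanLin_coordProj_le S x) 2) hlam0
  linear_combination h1 + h2

end CoordinateSpace

theorem proj_walk_proj_opNorm_le_general
    {m : ℕ} (hm : 0 < m) (P : Matrix (Fin m) (Fin m) ℝ) (lam : ℝ)
    (hsymm : P.IsSymm)
    (he : P.mulVec (fun _ => 1 / Real.sqrt m) = fun _ => 1 / Real.sqrt m)
    (hlam0 : 0 ≤ lam) (hlam1 : lam < 1)
    (hspec : ∀ x : Fin m → ℝ, (∑ v, x v) = 0 →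
      euclNorm (P.mulVec x) ≤ lam * euclNorm x)
    (S S' : Finset (Fin m)) :
    matrixOpNorm (coordProj S' * P * coordProj S) ≤
      Real.sqrt (lam + (1 - lam) * S.card / m) *
        Real.sqrt (lam + (1 - lam) * S'.card / m) := by
  set T := toEuclideanLin P
  have hT : T.IsSymmetric := isSymmetric_toEuclideanLin_iff.mpr (isHermitian_iff_isSymm.mpr hsymm)
  have hTe : T (uniformUnit m) = uniformUnit m := congrArg (toLp 2) he
  have hgap (x) (hx : ⟪uniformUnit m, x⟫ = 0) : ‖T x‖ ≤ lam * ‖x‖ := by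
    have hsum : ∑ v, x v = 0 := by simpa [inner_uniformUnit, hm.ne'] using hx
    simpa [euclNorm_eq_norm, T, toLpLin_apply] using hspec _ hsum
  refine ContinuousLinearMap.opNorm_le_of_inner_le _ (by positivity) fun u w => ?_
  calc ⟪w, toEuclideanLin (coordProj S' * P * coordProj S) u⟫
      = ⟪toEuclideanLin (coordProj S') w, T (toEuclideanLin (coordProj S) u)⟫ := by
        simp only [toLpLin_mul_same, LinearMap.comp_apply]
        exact (isSymmetric_toEuclideanLin_coordProj S' _ _).symm
    _ ≤ _ := (le_abs_self _).trans
        (abs_inner_apply_le_of_spectral_gap hT (norm_uniformUnit hm) hTe hlam0 hgap _ _)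
    _ ≤ (√(lam + (1 - lam) * S.card / m) * ‖u‖) * (√(lam + (1 - lam) * S'.card / m) * ‖w‖) := by
        gcongr <;> exact sqrt_spectralGapForm_coordProj_le hlam0 hlam1.le _ _
    _ = _ := by ring

/-- Let `P` be the transition matrix of the random walk on a regular graph on
`m` vertices: `P` is symmetric with nonnegative entries, has eigenvalue `1` on
the uniform vector `e = (1,…,1)/√m`, and all eigenvalues on `e^⊥` are at most
`λ < 1` in absolute value. For subsets `S, S'` of the vertex set, with `Π, Π'`
the corresponding coordinate projections,
`‖Π' P Π‖ ≤ √(λ + (1-λ)|S|/m) · √(λ + (1-λ)|S'|/m)`. -/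
theorem proj_walk_proj_opNorm_le
    {m : ℕ} (hm : 0 < m) (P : Matrix (Fin m) (Fin m) ℝ) (lam : ℝ)
    (hsymm : P.IsSymm) (hnonneg : ∀ u v, 0 ≤ P u v)
    (he : P.mulVec (fun _ => 1 / Real.sqrt m) = fun _ => 1 / Real.sqrt m)
    (hlam0 : 0 ≤ lam) (hlam1 : lam < 1)
    (hspec : ∀ x : Fin m → ℝ, (∑ v, x v) = 0 →
      euclNorm (P.mulVec x) ≤ lam * euclNorm x)
    (S S' : Finset (Fin m)) :
    matrixOpNorm (coordProj S' * P * coordProj S) ≤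
      Real.sqrt (lam + (1 - lam) * S.card / m) *
        Real.sqrt (lam + (1 - lam) * S'.card / m) :=
  proj_walk_proj_opNorm_le_general hm P lam hsymm he hlam0 hlam1 hspec S S'
end

section
/- Let α₁,...,α_{2^r-1} be the nonzero elements of GF(2^r), let M be the (2^r-1) × k matrix over GF(2^r) with rows (1, α_i, α_i², ..., α_i^{k-1}), and let M̃ be the corresponding (2^r-1) × kr matrix over GF(2) obtained by expanding each field element in a GF(2)-basis. If Z is uniformly distributed on GF(2)^{kr}, then the coordinates of X = M̃Z are k-wise independent uniform bits: for every set I of k indices, (X_i)_{i∈I} is uniformly distributed on GF(2)^k. -/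
/-!
The map `Z ↦ X` is `GF(2)`-linear, and a surjective homomorphism of finite groups pushes the
uniform distribution forward to the uniform one, its fibres being cosets of the kernel. It is
onto because the `k × k` Vandermonde system `∑ⱼ cⱼ αᵢ^j = wᵢ` (`i ∈ I`) is solvable over
`GF(2^r)` by Lagrange interpolation: solving it for `wᵢ = vᵢ • b z` and applying the coordinate
functional `b.coord z` recovers any prescribed bits `v`.
-/

open scoped ENNReal

open Finset Function

theorem PMF.map_uniformOfFintype_of_surjective {A B : Type*} [AddGroup A] [Fintype A]
    [AddMonoid B] [Fintype B] [DecidableEq B] (f : A →+ B) (hf : Surjective f) :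
    PMF.map f (PMF.uniformOfFintype A) = PMF.uniformOfFintype B := by
  have hmap : ∀ y, PMF.map f (PMF.uniformOfFintype A) y =
      #{a | f a = y} * (Fintype.card A : ℝ≥0∞)⁻¹ := by
    intro y
    simp [PMF.map_apply, tsum_fintype, Finset.sum_ite, eq_comm]
  have hfiber : ∀ y, #{a | f a = y} = #{a | f a = 0} := fun y =>
    AddMonoidHom.card_fiber_eq_of_mem_range f (hf y) (hf 0)
  have hcard : Fintype.card A = #{a | f a = 0} * Fintype.card B := by
    rw [← Finset.card_univ, card_eq_sum_card_fiberwise fun a _ => mem_univ (f a)]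
    simp [hfiber, mul_comm]
  have hpos : (#{a | f a = 0} : ℝ≥0∞) ≠ 0 := by
    obtain ⟨a, ha⟩ := hf 0
    exact Nat.cast_ne_zero.mpr (card_ne_zero.mpr ⟨a, by simp [ha]⟩)
  ext y
  rw [hmap, hfiber, PMF.uniformOfFintype_apply, hcard, Nat.cast_mul,
    ENNReal.mul_inv (by simp) (by simp), ENNReal.mul_inv_cancel_left hpos (by simp)]

namespace Matrix

variable {R K ι m n : Type*} [CommRing R] [Ring K] [Algebra R K] [Fintype ι]

/-- The paper's `M̃`: each entry of `A` is replaced by the row of its `b`-coordinates. -/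
noncomputable def expandAlongBasis (b : Module.Basis ι R K) (A : Matrix m n K) :
    Matrix m (n × ι) R :=
  of fun i js => b.repr (A i js.1) js.2

theorem mulVec_expandAlongBasis_surjective [Nontrivial K] [Fintype n]
    (b : Module.Basis ι R K) {A : Matrix m n K} (hA : Surjective A.mulVec) :
    Surjective (A.expandAlongBasis b).mulVec := by
  intro v
  obtain ⟨z⟩ := b.index_nonempty
  obtain ⟨c, hc⟩ := hA fun i => v i • b z
  -- with this choice of `Z`, the expanded system computes `b.coord z (A *ᵥ c)`
  refine ⟨fun js => b.coord z (b js.2 * c js.1), funext fun i => ?_⟩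
  have hrepr : ∀ x y : K, ∑ s, b.repr x s * b.coord z (b s * y) = b.coord z (x * y) := by
    intro x y
    have := congrArg (b.coord z ∘ₗ LinearMap.mulRight R y) (b.sum_repr x)
    simpa only [map_sum, map_smul, LinearMap.comp_apply, LinearMap.mulRight_apply,
      smul_eq_mul, smul_mul_assoc] using this
  calc (A.expandAlongBasis b *ᵥ fun js => b.coord z (b js.2 * c js.1)) i
      = ∑ j, ∑ s, b.repr (A i j) s * b.coord z (b s * c j) := by
        simp [mulVec, dotProduct, expandAlongBasis, Fintype.sum_prod_type]
    _ = b.coord z ((A *ᵥ c) i) := by simp only [hrepr, mulVec, dotProduct, map_sum]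
    _ = v i := by simp [hc]

theorem mulVec_of_pow_surjective {F J : Type*} [Field F] [Fintype J] [DecidableEq J]
    {α : J → F} (hα : Injective α) {k : ℕ} (hk : Fintype.card J ≤ k) :
    Surjective (of fun i (j : Fin k) => α i ^ (j : ℕ)).mulVec := by
  intro w
  set p := Lagrange.interpolate univ α w
  have hdeg : p.degree < k :=
    (Lagrange.degree_interpolate_lt w hα.injOn).trans_le (by exact_mod_cast hk)
  refine ⟨fun j => p.coeff j, funext fun i => ?_⟩
  calc ((of fun i (j : Fin k) => α i ^ (j : ℕ)) *ᵥ fun j => p.coeff j) i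
      = ∑ j : Fin k, p.coeff j * α i ^ (j : ℕ) := by simp [mulVec, dotProduct, mul_comm]
    _ = p.eval (α i) := by
        rw [Polynomial.sum_fin (fun e a => a * α i ^ e) (by simp) hdeg, Polynomial.eval_eq_sum]
    _ = w i := Lagrange.eval_interpolate_at_node w hα.injOn (mem_univ i)

end Matrix

theorem abi_kwise_independent_bits_general
    (r k : ℕ)
    (α : Fin (2 ^ r - 1) → GaloisField 2 r)
    (hinj : Function.Injective α)
    (b : Module.Basis (Fin r) (ZMod 2) (GaloisField 2 r))
    (I : Finset (Fin (2 ^ r - 1))) (hI : I.card = k) :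
    PMF.map
        (fun Z : Fin k × Fin r → ZMod 2 => fun i : I =>
          ∑ j : Fin k, ∑ s : Fin r, b.repr (α i ^ (j : ℕ)) s * Z (j, s))
        (PMF.uniformOfFintype (Fin k × Fin r → ZMod 2)) =
      PMF.uniformOfFintype ((i : I) → ZMod 2) := by
  classical
  set A : Matrix I (Fin k) (GaloisField 2 r) := .of fun i j => α i ^ (j : ℕ)
  have hA : Surjective A.mulVec :=
    Matrix.mulVec_of_pow_surjective (hinj.comp Subtype.val_injective) (by simp [hI])
  have hX : (fun Z : Fin k × Fin r → ZMod 2 => fun i : I =>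
      ∑ j : Fin k, ∑ s : Fin r, b.repr (α i ^ (j : ℕ)) s * Z (j, s)) =
      (A.expandAlongBasis b).mulVecLin := by
    ext Z i
    simp [A, Matrix.expandAlongBasis, Matrix.mulVec, dotProduct, Fintype.sum_prod_type]
  rw [hX]
  exact PMF.map_uniformOfFintype_of_surjective (A.expandAlongBasis b).mulVecLin.toAddMonoidHom
    (Matrix.mulVec_expandAlongBasis_surjective b hA)

/-- **Alon–Babai–Itai construction of `k`-wise independent bits.**
Let `α₁,…,α_{2^r-1}` be the nonzero elements of `GF(2^r)`, and let `M̃` be the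
`(2^r-1) × kr` matrix over `GF(2)` whose row `i` is the concatenation of the
`GF(2)`-basis expansions of `1, αᵢ, αᵢ², …, αᵢ^{k-1}`. If `Z` is uniformly
distributed on `GF(2)^{kr}`, then the coordinates of `X = M̃Z` are `k`-wise
independent uniform bits: for every set `I` of `k` indices, `(Xᵢ)_{i∈I}` is
uniformly distributed on `GF(2)^k`. -/
theorem abi_kwise_independent_bits
    (r k : ℕ) (hr : 1 ≤ r) (hk : 1 ≤ k)
    (α : Fin (2 ^ r - 1) → GaloisField 2 r)
    (hinj : Function.Injective α) (hne : ∀ i, α i ≠ 0)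
    (b : Module.Basis (Fin r) (ZMod 2) (GaloisField 2 r))
    (I : Finset (Fin (2 ^ r - 1))) (hI : I.card = k) :
    PMF.map
        (fun Z : Fin k × Fin r → ZMod 2 => fun i : I =>
          ∑ j : Fin k, ∑ s : Fin r, b.repr (α i ^ (j : ℕ)) s * Z (j, s))
        (PMF.uniformOfFintype (Fin k × Fin r → ZMod 2)) =
      PMF.uniformOfFintype ((i : I) → ZMod 2) :=
  abi_kwise_independent_bits_general r k α hinj b I hI
end
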